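/- arXiv:0804.1350 — 5 statements merged into one kernel-verified Lean document; each statement's English description precedes it below -/
import Mathlib

section
/- Let M be the spliced sum of two knot complements X1, X2 in S^3 along a torus T, and let α : π1(M) → SU(3) be a representation. If the restriction α1 of α to π1(X1) is abelian, then α is the trivial representation. (Group-theoretic version: suppose G is a group containing subgroups G1, G2 with elements μ1, λ1 ∈ G1 and μ2, λ2 ∈ G2 such that μ1 normally generates G1, μ2 normally generates G2, λ1 lies in the commutator subgroup of G1, λ2 lies in the commutator subgroup of G2, G is generated by G1 ∪ G2, and in G we have μ1 = λ2 and λ1 = μ2. If α : G → SU(3) is a homomorphism whose restriction to G1 is abelian (has abelian image), then α is trivial.) -/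
/-- `SU(3)` as the subgroup of the unitary group `U(3)` of matrices of determinant one. -/
def SU3 : Subgroup (Matrix.unitaryGroup (Fin 3) ℂ) where
  carrier := {g | (g : Matrix (Fin 3) (Fin 3) ℂ).det = 1}
  mul_mem' := fun {a b} ha hb => by
    simp only [Set.mem_setOf_eq, Matrix.UnitaryGroup.mul_val, Matrix.det_mul] at *
    rw [ha, hb, mul_one]
  one_mem' := by simp
  inv_mem' := fun {a} ha => by
    simp only [Set.mem_setOf_eq, Matrix.UnitaryGroup.inv_val, Matrix.star_eq_conjTranspose,
      Matrix.det_conjTranspose] at *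
    rw [ha, star_one]


private lemma aux_normal_gen {G H : Type*} [Group G] [Group H] (K : Subgroup G) (μ : G)
    (hμ : μ ∈ K) (hgen : Subgroup.normalClosure ({⟨μ, hμ⟩} : Set K) = ⊤)
    (f : G →* H) (h1 : f μ = 1) : ∀ a ∈ K, f a = 1 := by
  intro a ha
  have hle : Subgroup.normalClosure ({⟨μ, hμ⟩} : Set K) ≤ (f.comp K.subtype).ker :=
    Subgroup.normalClosure_le_normal (by
      intro x hx
      simp only [Set.mem_singleton_iff] at hx
      subst hx
      simpa [MonoidHom.mem_ker] using h1)
  have : (⟨a, ha⟩ : K) ∈ (f.comp K.subtype).ker := hle (hgen ▸ Subgroup.mem_top _)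
  simpa [MonoidHom.mem_ker] using this

/-- Group-theoretic version of: a representation `α : π₁(M) → SU(3)` of a spliced sum which
is abelian on one knot-complement side is trivial.  Here `G1, G2 ≤ G` are the two knot
groups, `μᵢ` normally generates `Gᵢ`, `λᵢ` lies in the commutator subgroup of `Gᵢ`, the
splicing relations `μ1 = lam2`, `lam1 = μ2` hold, and `G = ⟨G1, G2⟩`. -/
theorem spliced_abelian_restriction_trivial {G : Type*} [Group G]
    (G1 G2 : Subgroup G) (μ1 lam1 μ2 lam2 : G)
    (hμ1 : μ1 ∈ G1) (hlam1 : lam1 ∈ G1) (hμ2 : μ2 ∈ G2) (hlam2 : lam2 ∈ G2)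
    (hgen1 : Subgroup.normalClosure ({⟨μ1, hμ1⟩} : Set G1) = ⊤)
    (hgen2 : Subgroup.normalClosure ({⟨μ2, hμ2⟩} : Set G2) = ⊤)
    (hcomm1 : (⟨lam1, hlam1⟩ : G1) ∈ commutator G1)
    (hcomm2 : (⟨lam2, hlam2⟩ : G2) ∈ commutator G2)
    (hsplice1 : μ1 = lam2) (hsplice2 : lam1 = μ2)
    (hgen : G1 ⊔ G2 = ⊤)
    (α : G →* SU3)
    (hab : ∀ a ∈ G1, ∀ b ∈ G1, α a * α b = α b * α a) :
    ∀ g : G, α g = 1 := by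
  have hcommker : ∀ (K : Subgroup G), (∀ a ∈ K, ∀ b ∈ K, α a * α b = α b * α a) →
      ∀ x : K, x ∈ commutator K → α (x : G) = 1 := by
    intro K hK x hx
    have hle : commutator K ≤ (α.comp K.subtype).ker := by
      rw [commutator]
      refine Subgroup.commutator_le.mpr ?_
      intro a _ b _
      have := hK a a.2 b b.2
      simp only [MonoidHom.mem_ker, MonoidHom.comp_apply]
      have : α ((a : G) * b * (a : G)⁻¹ * (b : G)⁻¹) = 1 := by
        rw [map_mul, map_mul, map_mul, map_inv, map_inv, hK a a.2 b b.2]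
        group
      simpa [commutatorElement_def] using this
    have := hle hx
    simpa [MonoidHom.mem_ker] using this
  have hlam1_one : α lam1 = 1 := hcommker G1 hab ⟨lam1, hlam1⟩ hcomm1
  have hμ2_one : α μ2 = 1 := hsplice2 ▸ hlam1_one
  have hG2 : ∀ b ∈ G2, α b = 1 := aux_normal_gen G2 μ2 hμ2 hgen2 α hμ2_one
  have hμ1_one : α μ1 = 1 := by rw [hsplice1]; exact hG2 lam2 hlam2
  have hG1 : ∀ a ∈ G1, α a = 1 := aux_normal_gen G1 μ1 hμ1 hgen1 α hμ1_one
  intro g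
  have hg : g ∈ Subgroup.closure ((G1 : Set G) ∪ G2) := by
    rw [Subgroup.closure_union, Subgroup.closure_eq, Subgroup.closure_eq, hgen]
    exact Subgroup.mem_top _
  refine Subgroup.closure_induction ?_ (by simp) ?_ ?_ hg
  · rintro x (hx | hx)
    · exact hG1 x hx
    · exact hG2 x hx
  · intro x y _ _ hx hy; rw [map_mul, hx, hy, mul_one]
  · intro x _ hx; rw [map_inv, hx, inv_one]
end

section
/- With the same splicing setup: if α : G → SU(3) is a homomorphism such that α(μ1) is central in SU(3), then α is trivial. -/
/-- Group-theoretic version of: a representation `α : π₁(M) → SU(3)` of a spliced sum which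
sends the meridian `μ1` to a central element of `SU(3)` is trivial. -/
theorem spliced_central_meridian_trivial {G : Type*} [Group G]
    (G1 G2 : Subgroup G) (μ1 lam1 μ2 lam2 : G)
    (hμ1 : μ1 ∈ G1) (hlam1 : lam1 ∈ G1) (hμ2 : μ2 ∈ G2) (hlam2 : lam2 ∈ G2)
    (hgen1 : Subgroup.normalClosure ({⟨μ1, hμ1⟩} : Set G1) = ⊤)
    (hgen2 : Subgroup.normalClosure ({⟨μ2, hμ2⟩} : Set G2) = ⊤)
    (hcomm1 : (⟨lam1, hlam1⟩ : G1) ∈ commutator G1)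
    (hcomm2 : (⟨lam2, hlam2⟩ : G2) ∈ commutator G2)
    (hsplice1 : μ1 = lam2) (hsplice2 : lam1 = μ2)
    (hgen : G1 ⊔ G2 = ⊤)
    (α : G →* SU3)
    (hcentral : α μ1 ∈ Subgroup.center SU3) :
    ∀ g : G, α g = 1 := by
  -- φ : G1 → SU3, ψ : G2 → SU3
  set φ : G1 →* SU3 := α.comp G1.subtype with hφ
  set ψ : G2 →* SU3 := α.comp G2.subtype with hψ
  -- Step 1: every element of G1 maps into the center
  have hcen : ∀ x : G1, φ x ∈ Subgroup.center SU3 := by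
    intro x
    have hx : x ∈ Subgroup.normalClosure ({⟨μ1, hμ1⟩} : Set G1) := by
      rw [hgen1]; trivial
    haveI : (Subgroup.comap φ (Subgroup.center SU3)).Normal :=
      Subgroup.Normal.comap inferInstance φ
    have := Subgroup.normalClosure_le_normal
      (N := Subgroup.comap φ (Subgroup.center SU3))
      (by
        intro y hy
        rcases hy with rfl
        simpa [φ] using hcentral) hx
    simpa using this
  -- Step 2: α kills the commutator subgroup of G1, hence α lam1 = 1
  have hc1 : commutator G1 ≤ φ.ker := by
    rw [commutator_eq_closure, Subgroup.closure_le]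
    rintro y ⟨a, b, rfl⟩
    open scoped commutatorElement in
    have : φ ⁅a, b⁆ = ⁅φ a, φ b⁆ := map_commutatorElement φ a b
    have hcomm : Commute (φ a) (φ b) := (Subgroup.mem_center_iff.mp (hcen a) (φ b)).symm
    simp [MonoidHom.mem_ker, this, commutatorElement_eq_one_iff_commute.mpr hcomm]
  have hμ2one : α μ2 = 1 := by
    have := hc1 hcomm1
    rw [MonoidHom.mem_ker] at this
    rw [← hsplice2]
    simpa [φ] using this
  -- Step 3: α kills G2
  have hG2 : ∀ x ∈ G2, α x = 1 := by
    have hker : Subgroup.normalClosure ({⟨μ2, hμ2⟩} : Set G2) ≤ ψ.ker :=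
      Subgroup.normalClosure_le_normal (by
        intro y hy; rcases hy with rfl
        simpa [ψ, MonoidHom.mem_ker] using hμ2one)
    rw [hgen2] at hker
    intro x hx
    have := hker (Subgroup.mem_top (⟨x, hx⟩ : G2))
    simpa [ψ, MonoidHom.mem_ker] using this
  -- Step 4: α μ1 = 1
  have hμ1one : α μ1 = 1 := by rw [hsplice1]; exact hG2 lam2 hlam2
  -- Step 5: α kills G1
  have hG1 : ∀ x ∈ G1, α x = 1 := by
    have hker : Subgroup.normalClosure ({⟨μ1, hμ1⟩} : Set G1) ≤ φ.ker :=
      Subgroup.normalClosure_le_normal (by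
        intro y hy; rcases hy with rfl
        simpa [φ, MonoidHom.mem_ker] using hμ1one)
    rw [hgen1] at hker
    intro x hx
    have := hker (Subgroup.mem_top (⟨x, hx⟩ : G1))
    simpa [φ, MonoidHom.mem_ker] using this
  -- Step 6: conclude on all of G
  intro g
  have hg : g ∈ G1 ⊔ G2 := by rw [hgen]; trivial
  rw [Subgroup.sup_eq_closure] at hg
  induction hg using Subgroup.closure_induction with
  | mem x hx =>
    rcases hx with hx | hx
    · exact hG1 x hx
    · exact hG2 x hx
  | one => simp
  | mul x y _ _ ihx ihy => simp [map_mul, ihx, ihy]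
  | inv x _ ihx => simp [map_inv, ihx]
end

section
/- Trace formula for the meridian of the (2,q) torus knot: with β_{k,s}(x) = i cos(πs) + j sin(πs), β_{k,s}(y) = e^{kπi/q} in the unit quaternions, and meridian μ = x y^{(1-q)/2} (q odd), the real part of β_{k,s}(μ) equals cos(πs)·sin(k(q-1)π/(2q)). Consequently β_{k,s}(μ) is conjugate to e^{2πiu} where cos(2πu) = cos(πs)·sin(k(q-1)π/(2q)). -/
set_option maxHeartbeats 1000000

/-- `β_{k,s}(x) = i·cos(πs) + j·sin(πs)` as a quaternion. -/
noncomputable def betaX (s : ℝ) : Quaternion ℝ :=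
  ⟨0, Real.cos (Real.pi * s), Real.sin (Real.pi * s), 0⟩

/-- `β_{k,s}(y) = e^{kπi/q}` as a quaternion. -/
noncomputable def betaY (q k : ℕ) : Quaternion ℝ :=
  ⟨Real.cos (k * Real.pi / q), Real.sin (k * Real.pi / q), 0, 0⟩

/-- The unit quaternion `e^{iθ} = cos θ + i·sin θ`. -/
noncomputable def circQ (θ : ℝ) : Quaternion ℝ := ⟨Real.cos θ, Real.sin θ, 0, 0⟩

lemma circQ_mul (a b : ℝ) : circQ a * circQ b = circQ (a + b) := by
  ext <;>
    simp only [Quaternion.re_mul, Quaternion.imI_mul, Quaternion.imJ_mul, Quaternion.imK_mul] <;>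
    simp [circQ, Real.cos_add, Real.sin_add] <;> ring

lemma circQ_zero : circQ 0 = 1 := by
  unfold circQ
  ext <;> simp [Quaternion.ext_iff, Quaternion.re_one, Quaternion.imI_one, Quaternion.imJ_one,
    Quaternion.imK_one]

lemma circQ_inv (a : ℝ) : (circQ a)⁻¹ = circQ (-a) := by
  apply inv_eq_of_mul_eq_one_right
  rw [circQ_mul, add_neg_cancel, circQ_zero]

lemma circQ_pow (a : ℝ) (n : ℕ) : circQ a ^ n = circQ (n * a) := by
  induction n with
  | zero => simpa using circQ_zero.symm
  | succ n ih =>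
      rw [pow_succ, ih, circQ_mul]
      push_cast
      ring_nf

lemma circQ_zpow (a : ℝ) (n : ℤ) : circQ a ^ n = circQ (n * a) := by
  cases n with
  | ofNat n => rw [Int.ofNat_eq_natCast, zpow_natCast, circQ_pow]; norm_num
  | negSucc n =>
      rw [zpow_negSucc, circQ_pow, circQ_inv, Int.cast_negSucc]
      push_cast
      ring_nf

/-- Trace formula for the meridian of the `(2,q)` torus knot: the real part of
`β_{k,s}(μ) = X·Y^{(1-q)/2}` equals `cos(πs)·sin(k(q-1)π/(2q))`; consequently
`β_{k,s}(μ)` is conjugate to `e^{2πiu}` whenever `cos(2πu) = cos(πs)·sin(k(q-1)π/(2q))`. -/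
theorem meridian_trace_formula (q k : ℕ) (hq : Odd q) (hk : Odd k) (hk1 : 1 ≤ k)
    (hk2 : k ≤ q - 2) (s : ℝ) (hs : s ∈ Set.Icc (0 : ℝ) 1) :
    (betaX s * betaY q k ^ ((1 - (q : ℤ)) / 2)).re =
      Real.cos (Real.pi * s) * Real.sin (k * ((q : ℝ) - 1) * Real.pi / (2 * q)) ∧
    ∀ u : ℝ, Real.cos (2 * Real.pi * u) =
        Real.cos (Real.pi * s) * Real.sin (k * ((q : ℝ) - 1) * Real.pi / (2 * q)) →
      ∃ g : Quaternion ℝ, g ≠ 0 ∧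
        g * circQ (2 * Real.pi * u) * g⁻¹ =
          betaX s * betaY q k ^ ((1 - (q : ℤ)) / 2) := by
  obtain ⟨t, ht⟩ := hq
  have hqR : (q : ℝ) = 2 * t + 1 := by exact_mod_cast congrArg (Nat.cast : ℕ → ℝ) ht
  have hq0 : (q : ℝ) ≠ 0 := by rw [hqR]; positivity
  set ψ : ℝ := (-(t : ℤ) : ℝ) * (k * Real.pi / q) with hψ
  have hm : (1 - (q : ℤ)) / 2 = -(t : ℤ) := by omega
  have hpow : betaY q k ^ ((1 - (q : ℤ)) / 2) = circQ ψ := by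
    have hY : betaY q k = circQ (k * Real.pi / q) := rfl
    rw [hY, hm, circQ_zpow]
    congr 1
    rw [hψ]
    push_cast
    ring
  have hsinS : Real.sin (k * ((q : ℝ) - 1) * Real.pi / (2 * q)) = -Real.sin ψ := by
    have harg : k * ((q : ℝ) - 1) * Real.pi / (2 * q) = -ψ := by
      rw [hψ, hqR]
      push_cast
      field_simp
      ring
    rw [harg, Real.sin_neg]
  set c := Real.cos (Real.pi * s) with hcdef
  set s' := Real.sin (Real.pi * s) with hsdef
  set a := Real.cos ψ with hadef
  set b := Real.sin ψ with hbdef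
  have hP : betaX s * circQ ψ = ⟨-(c * b), c * a, s' * a, -(s' * b)⟩ := by
    ext <;>
      simp only [Quaternion.re_mul, Quaternion.imI_mul, Quaternion.imJ_mul, Quaternion.imK_mul] <;>
      simp [betaX, circQ, ← hcdef, ← hsdef, ← hadef, ← hbdef] <;> ring
  have ha2 : a ^ 2 + b ^ 2 = 1 := Real.cos_sq_add_sin_sq ψ
  have hc2 : c ^ 2 + s' ^ 2 = 1 := Real.cos_sq_add_sin_sq _
  constructor
  · rw [hpow, hP, hsinS]
    show -(c * b) = c * (-b)
    ring
  · intro u hu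
    rw [hpow]
    set cφ := Real.cos (2 * Real.pi * u) with hcφdef
    set sφ := Real.sin (2 * Real.pi * u) with hsφdef
    have hcφ : cφ = -(c * b) := by rw [hu, hsinS]; ring
    have hφ2 : sφ ^ 2 = 1 - (c * b) ^ 2 := by
      have h := Real.sin_sq_add_cos_sq (2 * Real.pi * u)
      rw [← hsφdef, ← hcφdef, hcφ] at h
      nlinarith [h]
    have hcirc : circQ (2 * Real.pi * u) = ⟨-(c * b), sφ, 0, 0⟩ := by
      unfold circQ
      rw [← hcφdef, ← hsφdef, hcφ]
    by_cases hdeg : c * a = -sφ ∧ s' * a = 0 ∧ s' * b = 0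
    · obtain ⟨g, hg⟩ : ∃ g : Quaternion ℝ, g = ⟨0, 0, 1, 0⟩ := ⟨_, rfl⟩
      refine ⟨g, ?_, ?_⟩
      · intro h
        rw [hg] at h
        have := congrArg QuaternionAlgebra.imJ h
        exact one_ne_zero this
      · have hgc : g * circQ (2 * Real.pi * u) = (betaX s * circQ ψ) * g := by
          obtain ⟨h1, h2, h3⟩ := hdeg
          ext <;>
            simp only [Quaternion.re_mul, Quaternion.imI_mul, Quaternion.imJ_mul,
              Quaternion.imK_mul] <;> simp only [hg, hcirc, betaX, circQ, ← hcdef, ← hsdef, ← hadef, ← hbdef,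
              ← hcφdef, ← hsφdef, hcφ] <;> linarith
        rw [hgc, mul_assoc, mul_inv_cancel₀, mul_one]
        intro h
        rw [hg] at h
        have := congrArg QuaternionAlgebra.imJ h
        exact one_ne_zero this
    · obtain ⟨g, hg⟩ : ∃ g : Quaternion ℝ,
          g = ⟨sφ * (sφ + c * a), 0, sφ * s' * b, sφ * s' * a⟩ := ⟨_, rfl⟩
      have hne : g ≠ 0 := by
        intro h
        rw [hg] at h
        have h0 := congrArg QuaternionAlgebra.re h
        have h2 := congrArg QuaternionAlgebra.imJ h
        have h3 := congrArg QuaternionAlgebra.imK h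
        simp only [QuaternionAlgebra.re_zero, QuaternionAlgebra.imJ_zero,
            QuaternionAlgebra.imK_zero] at h0 h2 h3
        apply hdeg
        by_cases hsφ0 : sφ = 0
        · have hcb : (c * b) ^ 2 = 1 := by nlinarith [hφ2, hsφ0]
          have hb2 : b ^ 2 = 1 := by nlinarith [sq_nonneg a, sq_nonneg s', sq_nonneg (c * b)]
          have hA : a = 0 := by nlinarith
          have hc21 : c ^ 2 = 1 := by nlinarith
          have hS : s' = 0 := by nlinarith
          exact ⟨by rw [hA, hsφ0]; ring, by rw [hA]; ring, by rw [hS]; ring⟩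
        · have h0' : sφ + c * a = 0 := by
            rcases mul_eq_zero.mp h0 with h | h
            · exact absurd h hsφ0
            · exact h
          have h2' : s' * b = 0 := by
            rcases mul_eq_zero.mp h2 with h | h
            · rcases mul_eq_zero.mp h with h | h
              · exact absurd h hsφ0
              · simp [h]
            · simp [h]
          have h3' : s' * a = 0 := by
            rcases mul_eq_zero.mp h3 with h | h
            · rcases mul_eq_zero.mp h with h | h
              · exact absurd h hsφ0
              · simp [h]
            · simp [h]
          exact ⟨by linarith, h3', h2'⟩
      refine ⟨g, hne, ?_⟩
      have hgc : g * circQ (2 * Real.pi * u) = (betaX s * circQ ψ) * g := by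
        ext <;>
          simp only [Quaternion.re_mul, Quaternion.imI_mul, Quaternion.imJ_mul,
            Quaternion.imK_mul] <;> simp only [hg, hcirc, betaX, circQ, ← hcdef, ← hsdef, ← hadef, ← hbdef,
              ← hcφdef, ← hsφdef, hcφ]
        · ring
        · linear_combination sφ * hφ2 - sφ * (c ^ 2 + s' ^ 2) * ha2 - sφ * hc2
        · ring
        · ring
      rw [hgc, mul_assoc, mul_inv_cancel₀ hne, mul_one]
end

section
/- Two lines on the 2-torus intersect in the expected number of points: let q1, q2 ≥ 3 be odd, k1, k2 odd with 1 ≤ ki ≤ qi - 2. Let γ1 ⊂ ℝ²/ℤ² be the image of the path θ ↦ (θ/π mod 1, q1·θ/π + 1/2 mod 1) for θ ∈ (k1π/(2q1), (2q1-k1)π/(2q1)), and γ2 the image of θ ↦ (q2·θ/π + 1/2 mod 1, θ/π mod 1) for θ ∈ (k2π/(2q2), (2q2-k2)π/(2q2)). Then γ1 and γ2 intersect in exactly (q1-k1)(q2-k2) points. -/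
set_option maxHeartbeats 1000000

open Set

private lemma torus_image_div_pi {α : Type*} (f : ℝ → α) (A B : ℝ) :
    (fun θ : ℝ => f (θ / Real.pi)) '' Set.Ioo (A * Real.pi) (B * Real.pi)
      = f '' Set.Ioo A B := by
  have hπ := Real.pi_pos
  ext p
  simp only [Set.mem_image, Set.mem_Ioo]
  constructor
  · rintro ⟨θ, ⟨h1, h2⟩, rfl⟩
    exact ⟨θ / Real.pi, ⟨(lt_div_iff₀ hπ).2 h1, (div_lt_iff₀ hπ).2 h2⟩, rfl⟩
  · rintro ⟨x, ⟨h1, h2⟩, rfl⟩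
    refine ⟨x * Real.pi, ⟨by nlinarith, by nlinarith⟩, by rw [mul_div_cancel_right₀ _ hπ.ne']⟩

lemma coe_eq_coe_iff' (x y : ℝ) :
    ((x : AddCircle (1:ℝ)) = (y : AddCircle (1:ℝ))) ↔ ∃ n : ℤ, x - y = n := by
  rw [show ((x : AddCircle (1:ℝ)) = y) ↔ ((x - y : ℝ) : AddCircle (1:ℝ)) = 0 from by
    rw [← sub_eq_zero, ← QuotientAddGroup.mk_sub]]
  rw [AddCircle.coe_eq_zero_iff]
  exact ⟨fun ⟨n, hn⟩ => ⟨n, by simpa using hn.symm⟩, fun ⟨n, hn⟩ => ⟨n, by simpa using hn.symm⟩⟩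

lemma aux_mem (q1 q2 m1 m2 : ℕ) (hq1 : 2*m1+3 ≤ q1) (hq2 : 2*m2+3 ≤ q2) (b a : ℤ)
    (hb1 : (m1:ℤ) < b) (hb2 : b < (q1:ℤ) - m1) (ha1 : (m2:ℤ) < a) (ha2 : a < (q2:ℤ) - m2) :
    ((q2:ℝ)*b + a - ((q2:ℝ)+1)/2)/((q1:ℝ)*(q2:ℝ) - 1)
      ∈ Set.Ioo (((2*m1+1:ℕ):ℝ)/(2*q1)) ((2*(q1:ℝ) - ((2*m1+1:ℕ):ℝ))/(2*q1)) := by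
  have hq1r : (2*(m1:ℝ)+3) ≤ q1 := by exact_mod_cast hq1
  have hq2r : (2*(m2:ℝ)+3) ≤ q2 := by exact_mod_cast hq2
  have hb1r : (m1:ℝ)+1 ≤ b := by exact_mod_cast hb1
  have hb2r : (b:ℝ) ≤ (q1:ℝ) - m1 - 1 := by exact_mod_cast (by omega : b ≤ (q1:ℤ) - m1 - 1)
  have ha1r : (m2:ℝ)+1 ≤ a := by exact_mod_cast ha1
  have ha2r : (a:ℝ) ≤ (q2:ℝ) - m2 - 1 := by exact_mod_cast (by omega : a ≤ (q2:ℤ) - m2 - 1)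
  have hm1 : (0:ℝ) ≤ m1 := Nat.cast_nonneg m1
  have hm2 : (0:ℝ) ≤ m2 := Nat.cast_nonneg m2
  have hN : (0:ℝ) < (q1:ℝ)*(q2:ℝ) - 1 := by nlinarith
  have h2q1 : (0:ℝ) < 2*(q1:ℝ) := by nlinarith
  push_cast
  constructor
  · rw [div_lt_div_iff₀ h2q1 hN]
    nlinarith [mul_nonneg (mul_nonneg (le_of_lt (by nlinarith : (0:ℝ) < (q1:ℝ)))
        (le_of_lt (by nlinarith : (0:ℝ) < (q2:ℝ)))) (sub_nonneg.2 hb1r),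
      mul_nonneg (le_of_lt (by nlinarith : (0:ℝ) < (q1:ℝ))) (sub_nonneg.2 ha1r),
      mul_nonneg (le_of_lt (by nlinarith : (0:ℝ) < (q1:ℝ))) hm2]
  · rw [div_lt_div_iff₀ hN h2q1]
    nlinarith [mul_nonneg (mul_nonneg (le_of_lt (by nlinarith : (0:ℝ) < (q1:ℝ)))
        (le_of_lt (by nlinarith : (0:ℝ) < (q2:ℝ)))) (sub_nonneg.2 hb2r),
      mul_nonneg (le_of_lt (by nlinarith : (0:ℝ) < (q1:ℝ))) (sub_nonneg.2 ha2r),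
      mul_nonneg (le_of_lt (by nlinarith : (0:ℝ) < (q1:ℝ))) hm2]

lemma torus_arcs_core (q1 q2 k1 k2 : ℕ)
    (hq1 : Odd q1) (hq2 : Odd q2) (hq1' : 3 ≤ q1) (hq2' : 3 ≤ q2)
    (hk1 : Odd k1) (hk1a : 1 ≤ k1) (hk1b : k1 ≤ q1 - 2)
    (hk2 : Odd k2) (hk2a : 1 ≤ k2) (hk2b : k2 ≤ q2 - 2) :
    (((fun x : ℝ => ((x : AddCircle (1 : ℝ)),
          ((q1 * x + 1 / 2 : ℝ) : AddCircle (1 : ℝ)))) ''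
        Set.Ioo ((k1:ℝ) / (2 * q1)) ((2 * q1 - (k1:ℝ)) / (2 * q1))) ∩
      ((fun y : ℝ => (((q2 * y + 1 / 2 : ℝ) : AddCircle (1 : ℝ)),
          ((y:ℝ) : AddCircle (1 : ℝ)))) ''
        Set.Ioo ((k2:ℝ) / (2 * q2)) ((2 * q2 - (k2:ℝ)) / (2 * q2)))).ncard =
      (q1 - k1) * (q2 - k2) := by
  obtain ⟨m1, hm1⟩ := hk1
  obtain ⟨m2, hm2⟩ := hk2
  subst hm1 hm2
  have hq1k : 2*m1+3 ≤ q1 := by omega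
  have hq2k : 2*m2+3 ≤ q2 := by omega
  have hq1r : (2*(m1:ℝ)+3) ≤ q1 := by exact_mod_cast hq1k
  have hq2r : (2*(m2:ℝ)+3) ≤ q2 := by exact_mod_cast hq2k
  have hm1' : (0:ℝ) ≤ m1 := Nat.cast_nonneg m1
  have hm2' : (0:ℝ) ≤ m2 := Nat.cast_nonneg m2
  have hq1p : (0:ℝ) < q1 := by linarith
  have hq2p : (0:ℝ) < q2 := by linarith
  have hN : (0:ℝ) < (q1:ℝ)*(q2:ℝ) - 1 := by nlinarith
  set N : ℝ := (q1:ℝ)*(q2:ℝ) - 1 with hNdef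
  set T : Finset (ℤ × ℤ) :=
    Finset.Icc ((m1:ℤ)+1) ((q1:ℤ) - m1 - 1) ×ˢ Finset.Icc ((m2:ℤ)+1) ((q2:ℤ) - m2 - 1)
    with hT
  set X : ℤ × ℤ → ℝ := fun z => ((q2:ℝ)*z.1 + z.2 - ((q2:ℝ)+1)/2)/N with hX
  set Y : ℤ × ℤ → ℝ := fun z => ((q1:ℝ)*z.2 + z.1 - ((q1:ℝ)+1)/2)/N with hY
  have hlo1 : ((2*m1+1:ℕ):ℝ) / (2 * q1) = (2*(m1:ℝ)+1) / (2*q1) := by push_cast; ring_nf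
  have hXmem : ∀ z ∈ T, X z ∈
      Set.Ioo (((2*m1+1:ℕ):ℝ) / (2*(q1:ℝ))) ((2*(q1:ℝ) - ((2*m1+1:ℕ):ℝ)) / (2*(q1:ℝ))) := by
    rintro ⟨b, a⟩ hz
    simp only [hT, Finset.mem_product, Finset.mem_Icc] at hz
    exact aux_mem q1 q2 m1 m2 hq1k hq2k b a (by omega) (by omega) (by omega) (by omega)
  have hYmem : ∀ z ∈ T, Y z ∈
      Set.Ioo (((2*m2+1:ℕ):ℝ) / (2*(q2:ℝ))) ((2*(q2:ℝ) - ((2*m2+1:ℕ):ℝ)) / (2*(q2:ℝ))) := by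
    rintro ⟨b, a⟩ hz
    simp only [hT, Finset.mem_product, Finset.mem_Icc] at hz
    have := aux_mem q2 q1 m2 m1 hq2k hq1k a b (by omega) (by omega) (by omega) (by omega)
    simpa [hY, hNdef, mul_comm ((q1:ℝ)) ((q2:ℝ))] using this
  have idY : ∀ z : ℤ × ℤ, (q1:ℝ) * X z + 1/2 = Y z + z.1 := by
    rintro ⟨b, a⟩
    simp only [hX, hY]
    field_simp
    ring
  have idX : ∀ z : ℤ × ℤ, (q2:ℝ) * Y z + 1/2 = X z + z.2 := by
    rintro ⟨b, a⟩
    simp only [hX, hY]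
    field_simp
    ring
  have hset :
      ((fun x : ℝ => ((x : AddCircle (1 : ℝ)),
          ((q1 * x + 1 / 2 : ℝ) : AddCircle (1 : ℝ)))) ''
        Set.Ioo (((2*m1+1:ℕ):ℝ) / (2 * q1)) ((2 * q1 - ((2*m1+1:ℕ):ℝ)) / (2 * q1))) ∩
      ((fun y : ℝ => (((q2 * y + 1 / 2 : ℝ) : AddCircle (1 : ℝ)),
          ((y:ℝ) : AddCircle (1 : ℝ)))) ''
        Set.Ioo (((2*m2+1:ℕ):ℝ) / (2 * q2)) ((2 * q2 - ((2*m2+1:ℕ):ℝ)) / (2 * q2)))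
      = (fun z : ℤ × ℤ => ((X z : AddCircle (1:ℝ)), (Y z : AddCircle (1:ℝ)))) '' ↑T := by
    ext p
    simp only [Set.mem_inter_iff, Set.mem_image, Set.mem_Ioo, Finset.coe_sort_coe,
      Finset.mem_coe]
    constructor
    · rintro ⟨⟨x, hx, rfl⟩, ⟨y, hy, hp⟩⟩
      rw [Prod.ext_iff] at hp
      obtain ⟨h1, h2⟩ := hp
      -- h1 : ↑(q2*y+1/2) = ↑x ;  h2 : ↑y = ↑(q1*x+1/2)
      obtain ⟨a, ha⟩ := (coe_eq_coe_iff' _ _).1 h1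
      obtain ⟨b', hb'⟩ := (coe_eq_coe_iff' _ _).1 h2
      set b : ℤ := -b' with hbdef
      have hb : (q1:ℝ)*x + 1/2 - y = (b:ℤ) := by push_cast [hbdef]; linarith
      have ha2 : (q2:ℝ)*y + 1/2 - x = (a:ℤ) := by linarith
      -- bounds on x, y
      have hx1 : (2*(m1:ℝ)+1)/(2*q1) < x := by
        have := hx.1; push_cast at this; linarith
      have hx2 : x < (2*(q1:ℝ) - (2*m1+1))/(2*q1) := by
        have := hx.2; push_cast at this; linarith
      have hy1 : (2*(m2:ℝ)+1)/(2*q2) < y := by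
        have := hy.1; push_cast at this; linarith
      have hy2 : y < (2*(q2:ℝ) - (2*m2+1))/(2*q2) := by
        have := hy.2; push_cast at this; linarith
      have hx0 : 0 < x := lt_trans (by positivity) hx1
      have hx01 : x < 1 := by
        have : (2*(q1:ℝ) - (2*m1+1))/(2*q1) < 1 := by
          rw [div_lt_one (by linarith)]; linarith
        linarith
      have hy0 : 0 < y := lt_trans (by positivity) hy1
      have hy01 : y < 1 := by
        have : (2*(q2:ℝ) - (2*m2+1))/(2*q2) < 1 := by
          rw [div_lt_one (by linarith)]; linarith
        linarith
      -- bounds on b, a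
      have hq1x1 : (2*(m1:ℝ)+1)/2 < (q1:ℝ)*x := by
        have := mul_lt_mul_of_pos_left hx1 hq1p
        rw [mul_div_assoc'] at this
        calc (2*(m1:ℝ)+1)/2 = (q1:ℝ)*(2*m1+1)/(2*q1) := by field_simp
        _ < (q1:ℝ)*x := this
      have hq1x2 : (q1:ℝ)*x < (2*(q1:ℝ) - (2*m1+1))/2 := by
        have := mul_lt_mul_of_pos_left hx2 hq1p
        rw [mul_div_assoc'] at this
        calc (q1:ℝ)*x < (q1:ℝ)*(2*(q1:ℝ) - (2*m1+1))/(2*q1) := this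
        _ = (2*(q1:ℝ) - (2*m1+1))/2 := by field_simp
      have hq2y1 : (2*(m2:ℝ)+1)/2 < (q2:ℝ)*y := by
        have := mul_lt_mul_of_pos_left hy1 hq2p
        rw [mul_div_assoc'] at this
        calc (2*(m2:ℝ)+1)/2 = (q2:ℝ)*(2*m2+1)/(2*q2) := by field_simp
        _ < (q2:ℝ)*y := this
      have hq2y2 : (q2:ℝ)*y < (2*(q2:ℝ) - (2*m2+1))/2 := by
        have := mul_lt_mul_of_pos_left hy2 hq2p
        rw [mul_div_assoc'] at this
        calc (q2:ℝ)*y < (q2:ℝ)*(2*(q2:ℝ) - (2*m2+1))/(2*q2) := this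
        _ = (2*(q2:ℝ) - (2*m2+1))/2 := by field_simp
      have hbmem : (m1:ℤ) < b ∧ b < (q1:ℤ) - m1 := by
        constructor
        · exact_mod_cast (show (m1:ℝ) < (b:ℤ) by rw [← hb]; linarith)
        · exact_mod_cast (show ((b:ℤ):ℝ) < (q1:ℝ) - m1 by rw [← hb]; linarith)
      have hamem : (m2:ℤ) < a ∧ a < (q2:ℤ) - m2 := by
        constructor
        · exact_mod_cast (show (m2:ℝ) < (a:ℤ) by rw [← ha2]; linarith)
        · exact_mod_cast (show ((a:ℤ):ℝ) < (q2:ℝ) - m2 by rw [← ha2]; linarith)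
      refine ⟨(b, a), ?_, ?_⟩
      · simp only [hT, Finset.mem_product, Finset.mem_Icc]
        omega
      · have hXx : X (b, a) = x := by
          simp only [hX]
          rw [div_eq_iff hN.ne', hNdef]
          linear_combination (-(q2:ℝ)) * hb - ha2
        have hYy : Y (b, a) = y := by
          simp only [hY]
          rw [div_eq_iff hN.ne', hNdef]
          linear_combination (-(q1:ℝ)) * ha2 - hb
        rw [Prod.ext_iff]
        constructor
        · simp only [hXx]
        · simp only [hYy]
          rw [coe_eq_coe_iff']
          exact ⟨-b, by push_cast; linarith⟩
    · rintro ⟨z, hzT, rfl⟩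
      refine ⟨⟨X z, hXmem z hzT, ?_⟩, ⟨Y z, hYmem z hzT, ?_⟩⟩
      · rw [Prod.ext_iff]
        refine ⟨rfl, ?_⟩
        rw [coe_eq_coe_iff']
        exact ⟨z.1, by rw [idY z]; ring⟩
      · rw [Prod.ext_iff]
        refine ⟨?_, rfl⟩
        rw [coe_eq_coe_iff']
        exact ⟨z.2, by rw [idX z]; ring⟩
  rw [hset]
  have hinj : Set.InjOn (fun z : ℤ × ℤ => ((X z : AddCircle (1:ℝ)), (Y z : AddCircle (1:ℝ)))) ↑T := by
    rintro z hz z' hz' h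
    rw [Finset.mem_coe] at hz hz'
    rw [Prod.ext_iff] at h
    obtain ⟨h1, h2⟩ := h
    have hXb : X z ∈ Set.Ioo (0:ℝ) 1 := by
      have := hXmem z hz
      refine ⟨lt_trans (by positivity) this.1, lt_trans this.2 ?_⟩
      rw [div_lt_one (by linarith)]; push_cast; linarith
    have hXb' : X z' ∈ Set.Ioo (0:ℝ) 1 := by
      have := hXmem z' hz'
      refine ⟨lt_trans (by positivity) this.1, lt_trans this.2 ?_⟩
      rw [div_lt_one (by linarith)]; push_cast; linarith
    have hYb : Y z ∈ Set.Ioo (0:ℝ) 1 := by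
      have := hYmem z hz
      refine ⟨lt_trans (by positivity) this.1, lt_trans this.2 ?_⟩
      rw [div_lt_one (by linarith)]; push_cast; linarith
    have hYb' : Y z' ∈ Set.Ioo (0:ℝ) 1 := by
      have := hYmem z' hz'
      refine ⟨lt_trans (by positivity) this.1, lt_trans this.2 ?_⟩
      rw [div_lt_one (by linarith)]; push_cast; linarith
    obtain ⟨n1, hn1⟩ := (coe_eq_coe_iff' _ _).1 h1
    obtain ⟨n2, hn2⟩ := (coe_eq_coe_iff' _ _).1 h2
    have hn1z : n1 = 0 := by
      have l1 : ((n1:ℤ):ℝ) < 1 := by rw [← hn1]; linarith [hXb.2, hXb'.1]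
      have l2 : (-1:ℝ) < ((n1:ℤ):ℝ) := by rw [← hn1]; linarith [hXb.1, hXb'.2]
      have : (n1:ℤ) < 1 ∧ (-1:ℤ) < n1 := ⟨by exact_mod_cast l1, by exact_mod_cast l2⟩
      omega
    have hn2z : n2 = 0 := by
      have l1 : ((n2:ℤ):ℝ) < 1 := by rw [← hn2]; linarith [hYb.2, hYb'.1]
      have l2 : (-1:ℝ) < ((n2:ℤ):ℝ) := by rw [← hn2]; linarith [hYb.1, hYb'.2]
      have : (n2:ℤ) < 1 ∧ (-1:ℤ) < n2 := ⟨by exact_mod_cast l1, by exact_mod_cast l2⟩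
      omega
    have hXe : X z = X z' := by
      have := hn1; rw [hn1z] at this; push_cast at this; linarith
    have hYe : Y z = Y z' := by
      have := hn2; rw [hn2z] at this; push_cast at this; linarith
    have E1 : (q2:ℝ)*z.1 + z.2 = (q2:ℝ)*z'.1 + z'.2 := by
      simp only [hX] at hXe
      field_simp at hXe
      linarith
    have E2 : (q1:ℝ)*z.2 + z.1 = (q1:ℝ)*z'.2 + z'.1 := by
      simp only [hY] at hYe
      field_simp at hYe
      linarith
    have hbb : ((z.1:ℝ) - z'.1) * ((q1:ℝ)*(q2:ℝ) - 1) = 0 := by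
      linear_combination (q1:ℝ) * E1 - E2
    have hbbz : (z.1:ℝ) = z'.1 := by
      rcases mul_eq_zero.1 hbb with h | h
      · linarith
      · exact absurd h hN.ne'
    have hb' : z.1 = z'.1 := by exact_mod_cast hbbz
    have ha' : z.2 = z'.2 := by
      have : (q1:ℝ) * z.2 = (q1:ℝ) * z'.2 := by
        rw [hb'] at E2; linarith
      have := mul_left_cancel₀ hq1p.ne' this
      exact_mod_cast this
    exact Prod.ext hb' ha'
  rw [Set.ncard_image_of_injOn hinj, Set.ncard_coe_finset]
  rw [hT, Finset.card_product, Int.card_Icc, Int.card_Icc]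
  have e1 : ((q1:ℤ) - m1 - 1 + 1 - ((m1:ℤ) + 1)).toNat = q1 - (2*m1+1) := by omega
  have e2 : ((q2:ℤ) - m2 - 1 + 1 - ((m2:ℤ) + 1)).toNat = q2 - (2*m2+1) := by omega
  rw [e1, e2]

/-- Two lines on the 2-torus `ℝ²/ℤ²` intersect in the expected number of points: for odd
`q1, q2 ≥ 3` and odd `k1, k2` with `1 ≤ kᵢ ≤ qᵢ - 2`, the arc `γ1` of slope `q1`
parameterized by `θ ↦ (θ/π, q1 θ/π + 1/2)` for `θ ∈ (k1 π/(2q1), (2q1-k1)π/(2q1))` and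
the arc `γ2` of slope `1/q2` parameterized by `θ ↦ (q2 θ/π + 1/2, θ/π)` for
`θ ∈ (k2 π/(2q2), (2q2-k2)π/(2q2))` intersect in exactly `(q1-k1)(q2-k2)` points. -/
theorem torus_arcs_intersection_count (q1 q2 k1 k2 : ℕ)
    (hq1 : Odd q1) (hq2 : Odd q2) (hq1' : 3 ≤ q1) (hq2' : 3 ≤ q2)
    (hk1 : Odd k1) (hk1a : 1 ≤ k1) (hk1b : k1 ≤ q1 - 2)
    (hk2 : Odd k2) (hk2a : 1 ≤ k2) (hk2b : k2 ≤ q2 - 2) :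
    (((fun θ : ℝ => (((θ / Real.pi : ℝ) : AddCircle (1 : ℝ)),
          ((q1 * θ / Real.pi + 1 / 2 : ℝ) : AddCircle (1 : ℝ)))) ''
        Set.Ioo (k1 * Real.pi / (2 * q1)) ((2 * q1 - k1) * Real.pi / (2 * q1))) ∩
      ((fun θ : ℝ => (((q2 * θ / Real.pi + 1 / 2 : ℝ) : AddCircle (1 : ℝ)),
          ((θ / Real.pi : ℝ) : AddCircle (1 : ℝ)))) ''
        Set.Ioo (k2 * Real.pi / (2 * q2)) ((2 * q2 - k2) * Real.pi / (2 * q2)))).ncard =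
      (q1 - k1) * (q2 - k2) := by
  have e1 : ((fun θ : ℝ => (((θ / Real.pi : ℝ) : AddCircle (1 : ℝ)),
          ((q1 * θ / Real.pi + 1 / 2 : ℝ) : AddCircle (1 : ℝ)))) ''
        Set.Ioo (k1 * Real.pi / (2 * q1)) ((2 * q1 - k1) * Real.pi / (2 * q1)))
      = ((fun x : ℝ => ((x : AddCircle (1 : ℝ)),
          ((q1 * x + 1 / 2 : ℝ) : AddCircle (1 : ℝ)))) ''
        Set.Ioo ((k1:ℝ) / (2 * q1)) ((2 * q1 - (k1:ℝ)) / (2 * q1))) := by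
    have h1 : (fun θ : ℝ => (((θ / Real.pi : ℝ) : AddCircle (1 : ℝ)),
            ((q1 * θ / Real.pi + 1 / 2 : ℝ) : AddCircle (1 : ℝ))))
        = fun θ : ℝ => (fun x : ℝ => ((x : AddCircle (1 : ℝ)),
            ((q1 * x + 1 / 2 : ℝ) : AddCircle (1 : ℝ)))) (θ / Real.pi) := by
      funext θ
      simp only [mul_div_assoc]
    rw [h1,
      show (k1:ℝ) * Real.pi / (2 * q1) = ((k1:ℝ) / (2 * q1)) * Real.pi by ring,
      show (2 * (q1:ℝ) - k1) * Real.pi / (2 * q1)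
          = ((2 * (q1:ℝ) - k1) / (2 * q1)) * Real.pi by ring]
    exact torus_image_div_pi (fun x : ℝ => ((x : AddCircle (1 : ℝ)),
          ((q1 * x + 1 / 2 : ℝ) : AddCircle (1 : ℝ)))) _ _
  have e2 : ((fun θ : ℝ => (((q2 * θ / Real.pi + 1 / 2 : ℝ) : AddCircle (1 : ℝ)),
          ((θ / Real.pi : ℝ) : AddCircle (1 : ℝ)))) ''
        Set.Ioo (k2 * Real.pi / (2 * q2)) ((2 * q2 - k2) * Real.pi / (2 * q2)))
      = ((fun y : ℝ => (((q2 * y + 1 / 2 : ℝ) : AddCircle (1 : ℝ)),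
          ((y:ℝ) : AddCircle (1 : ℝ)))) ''
        Set.Ioo ((k2:ℝ) / (2 * q2)) ((2 * q2 - (k2:ℝ)) / (2 * q2))) := by
    have h1 : (fun θ : ℝ => (((q2 * θ / Real.pi + 1 / 2 : ℝ) : AddCircle (1 : ℝ)),
            ((θ / Real.pi : ℝ) : AddCircle (1 : ℝ))))
        = fun θ : ℝ => (fun y : ℝ => (((q2 * y + 1 / 2 : ℝ) : AddCircle (1 : ℝ)),
            ((y:ℝ) : AddCircle (1 : ℝ)))) (θ / Real.pi) := by
      funext θ
      simp only [mul_div_assoc]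
    rw [h1,
      show (k2:ℝ) * Real.pi / (2 * q2) = ((k2:ℝ) / (2 * q2)) * Real.pi by ring,
      show (2 * (q2:ℝ) - k2) * Real.pi / (2 * q2)
          = ((2 * (q2:ℝ) - k2) / (2 * q2)) * Real.pi by ring]
    exact torus_image_div_pi (fun y : ℝ => (((q2 * y + 1 / 2 : ℝ) : AddCircle (1 : ℝ)),
          ((y:ℝ) : AddCircle (1 : ℝ)))) _ _
  rw [e1, e2]
  exact torus_arcs_core q1 q2 k1 k2 hq1 hq2 hq1' hq2' hk1 hk1a hk1b hk2 hk2a hk2b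
end

section
/- Twist conjugation identity: for the (2,q) torus knot group G, let χ_π : G → U(1) be the character with χ_π(μ) = −1 and β_{k,s} the SU(2) representation with β_{k,s}(x) = i cos(πs) + j sin(πs), β_{k,s}(y) = e^{kπi/q}. Then the twisted representation g ↦ χ_π(g)·β_{k,s}(g) (an SU(2)-valued representation, since χ_π takes values ±1) is conjugate in SU(2) to β_{k,1−s}. -/
theorem qR_mk_mul_mk (a b c d e f g h : ℝ) :
    (⟨a, b, c, d⟩ : Quaternion ℝ) * (⟨e, f, g, h⟩ : Quaternion ℝ) =
      (⟨a * e - b * f - c * g - d * h, a * f + b * e + c * h - d * g,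
        a * g - b * h + c * e + d * f, a * h + b * g - c * f + d * e⟩ : Quaternion ℝ) := by
  erw [Quaternion.ext_iff, Quaternion.re_mul, Quaternion.imI_mul, Quaternion.imJ_mul,
    Quaternion.imK_mul]
  simp
theorem qR_neg_mk (a b c d : ℝ) :
    -(⟨a, b, c, d⟩ : Quaternion ℝ) = (⟨-a, -b, -c, -d⟩ : Quaternion ℝ) := by
  erw [Quaternion.ext_iff, Quaternion.re_neg, Quaternion.imI_neg, Quaternion.imJ_neg,
    Quaternion.imK_neg]
  simp

/-- Twist conjugation identity for the `(2,q)` torus knot group: twisting the `SU(2)`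
representation `β_{k,s}` (given on generators by `x ↦ X = i·cos(πs) + j·sin(πs)`,
`y ↦ Y = e^{kπi/q}`) by the central character `χ_π` (with `χ_π(x) = -1`, `χ_π(y) = 1`,
corresponding to `χ_π(μ) = -1`) gives a representation conjugate in the unit quaternions
to `β_{k,1-s}` (given by `x ↦ i·cos(π(1-s)) + j·sin(π(1-s))`, `y ↦ Y`). -/
theorem twist_conjugation (q k : ℕ) (hq : Odd q) (hk : Odd k) (hk1 : 1 ≤ k)
    (hk2 : k ≤ q - 2) (s : ℝ) (hs : s ∈ Set.Icc (0 : ℝ) 1) :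
    ∃ g : Quaternion ℝ, g ≠ 0 ∧
      g * (-(betaX s)) * g⁻¹ = betaX (1 - s) ∧
      g * betaY q k * g⁻¹ = betaY q k := by
  set g : Quaternion ℝ := ⟨0,1,0,0⟩ with hg
  have hinv : g⁻¹ = (⟨0,-1,0,0⟩ : Quaternion ℝ) := by
    apply inv_eq_of_mul_eq_one_right
    rw [hg]
    erw [Quaternion.ext_iff, Quaternion.re_mul, Quaternion.imI_mul, Quaternion.imJ_mul,
      Quaternion.imK_mul, Quaternion.re_one, Quaternion.imI_one, Quaternion.imJ_one,
      Quaternion.imK_one]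
    norm_num
  refine ⟨g, ?_, ?_, ?_⟩
  · intro h
    have := congrArg QuaternionAlgebra.imI h
    simp [hg, Quaternion.imI_zero] at this
  · rw [hinv, hg, betaX]
    erw [qR_neg_mk, qR_mk_mul_mk]
    ext <;>
      simp [hg, betaX, Quaternion.re_mul, Quaternion.imI_mul, Quaternion.imJ_mul,
        Quaternion.imK_mul, mul_one_sub, Real.cos_sub, Real.sin_sub]
  · rw [hinv, hg, betaY]
    erw [qR_mk_mul_mk]
    ext <;>
      simp [hg, betaY, Quaternion.re_mul, Quaternion.imI_mul, Quaternion.imJ_mul,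
        Quaternion.imK_mul]
end
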